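/- arXiv:1608.03999 — 2 statements merged into one kernel-verified Lean document; each statement's English description precedes it below -/
import Mathlib

section
/- Suppose w is an antisymmetric edge-weight assignment on the vertex set V that is difference generated by Γ : V → ℝ (w(x,y) = Γ(x) − Γ(y)), and enumerate V as γ_1 ≤ γ_2 ≤ ... ≤ γ_m in nondecreasing order of Γ-values. Then for every k, there exists a monotone ordered k-partition of V (one respecting the Γ-order: lower Γ-values in weakly lower pieces) that achieves the maximum score among all ordered k-partitions. -/
/-!
For a difference-generated weight, the score of an ordered partition `R` is `∑ a, Γ a * b(R a)`,
where the balance `b(i)` counts the vertices below level `i` minus those above it. Permuting the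
vertices among the levels does not change the balance function, and `b` is monotone in the level,
so by the rearrangement inequality the score only grows when a maximizer's levels are
re-dealt to the vertices in `Γ`-order.
-/

/-- The score of an ordered `k`-partition (level function `P`, higher level =
higher piece) of a weighted tournament with antisymmetric weights `w`:
`v_w(P) = ∑_{x ≻ y} w x y`, summing over ordered pairs with `x`'s piece
strictly above `y`'s piece. -/
def opScore {V : Type*} [Fintype V] {k : ℕ} (w : V → V → ℝ) (P : V → Fin k) : ℝ :=
  ∑ x : V, ∑ y : V, if P y < P x then w x y else 0

theorem exists_perm_monovary_comp {ι α β : Type*} [Fintype ι] [LinearOrder α] [LinearOrder β]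
    (f : ι → α) (g : ι → β) : ∃ σ : Equiv.Perm ι, Monovary (f ∘ σ) g := by
  -- enumerate `ι` in `g`-order, then deal out the values of `f` in sorted order along it
  let e : Fin (Fintype.card ι) ≃ ι :=
    (Tuple.sort (g ∘ (Fintype.equivFin ι).symm)).trans (Fintype.equivFin ι).symm
  have hge : Monotone (g ∘ e) := Tuple.monotone_sort (g ∘ (Fintype.equivFin ι).symm)
  let τ := Tuple.sort (f ∘ e)
  have hfτ : Monotone (f ∘ e ∘ τ) := Tuple.monotone_sort (f ∘ e)
  refine ⟨e.symm.trans (τ.trans e), fun x y hxy => hfτ ?_⟩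
  by_contra! hyx
  have := hge hyx.le
  simp only [Function.comp_apply, Equiv.apply_symm_apply] at this
  exact this.not_gt hxy

section Balance

variable {V : Type*} [Fintype V] {k : ℕ}

noncomputable def opBalance (R : V → Fin k) (i : Fin k) : ℝ :=
  ∑ b, ((if R b < i then 1 else 0) - (if i < R b then 1 else 0))

theorem opBalance_comp_perm (R : V → Fin k) (σ : Equiv.Perm V) :
    opBalance (R ∘ σ) = opBalance R :=
  funext fun i =>
    Equiv.sum_comp σ fun b => ((if R b < i then 1 else 0) - (if i < R b then 1 else 0) : ℝ)

theorem opBalance_monotone (R : V → Fin k) : Monotone (opBalance R) := by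
  intro i j hij
  refine Finset.sum_le_sum fun b _ => ?_
  split_ifs <;> norm_num <;> order

theorem opScore_eq_sum_mul_opBalance (w : V → V → ℝ) (Γ : V → ℝ)
    (hΓ : ∀ x y, x ≠ y → w x y = Γ x - Γ y) (R : V → Fin k) :
    opScore w R = ∑ a, Γ a * opBalance R (R a) := by
  have hw : ∀ a b, (if R b < R a then w a b else 0)
      = Γ a * (if R b < R a then 1 else 0) - Γ b * (if R b < R a then 1 else 0) := by
    intro a b
    split_ifs with h
    · rw [hΓ a b (fun hab => (hab ▸ h).false)]; ring
    · ring
  simp only [opScore, opBalance, hw, Finset.sum_sub_distrib, ← Finset.mul_sum, mul_sub]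
  rw [Finset.sum_comm (f := fun a b => Γ b * _)]
  simp only [← Finset.mul_sum]

theorem opScore_le_opScore_comp_perm (w : V → V → ℝ) (Γ : V → ℝ)
    (hΓ : ∀ x y, x ≠ y → w x y = Γ x - Γ y) (R : V → Fin k) (σ : Equiv.Perm V)
    (hRσ : Monovary (R ∘ σ) Γ) : opScore w R ≤ opScore w (R ∘ σ) := by
  let g := opBalance R ∘ R
  have hg : Monovary Γ (g ∘ σ) := (hRσ.comp_monotone_left (opBalance_monotone R)).symm
  calc opScore w R = ∑ a, Γ a * (g ∘ σ) (σ⁻¹ a) := by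
        simp [opScore_eq_sum_mul_opBalance w Γ hΓ, g]
    _ ≤ ∑ a, Γ a * (g ∘ σ) a := hg.sum_mul_comp_perm_le_sum_mul
    _ = opScore w (R ∘ σ) := by
        simp [opScore_eq_sum_mul_opBalance w Γ hΓ, opBalance_comp_perm, g]

end Balance

theorem exists_monotone_maximal_ordered_partition_general
    {V : Type*} [Fintype V] (w : V → V → ℝ) (Γ : V → ℝ)
    (hΓ : ∀ x y : V, x ≠ y → w x y = Γ x - Γ y)
    (k : ℕ) (hk : 0 < k) :
    ∃ P : V → Fin k,
      (∀ x y : V, Γ x < Γ y → P x ≤ P y) ∧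
      ∀ Q : V → Fin k, opScore w Q ≤ opScore w P := by
  have : Nonempty (V → Fin k) := ⟨fun _ => ⟨0, hk⟩⟩
  obtain ⟨R, hR⟩ := Finite.exists_max (opScore w : (V → Fin k) → ℝ)
  obtain ⟨σ, hσ⟩ := exists_perm_monovary_comp R Γ
  exact ⟨R ∘ σ, hσ, fun Q => (hR Q).trans (opScore_le_opScore_comp_perm w Γ hΓ R σ hσ)⟩

/-- For a difference-generated (purely acyclic) edge-weight assignment, for
every `k` there is a monotone ordered `k`-partition — one placing vertices of
lower `Γ`-value in weakly lower pieces — achieving the maximum score among all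
ordered `k`-partitions. -/
theorem exists_monotone_maximal_ordered_partition
    {V : Type*} [Fintype V] (w : V → V → ℝ) (Γ : V → ℝ)
    (hanti : ∀ x y : V, w x y = -w y x)
    (hΓ : ∀ x y : V, x ≠ y → w x y = Γ x - Γ y)
    (k : ℕ) (hk : 0 < k) :
    ∃ P : V → Fin k,
      (∀ x y : V, Γ x < Γ y → P x ≤ P y) ∧
      ∀ Q : V → Fin k, opScore w Q ≤ opScore w P :=
  exists_monotone_maximal_ordered_partition_general w Γ hΓ k hk
end

section
/- Let w be a difference-generated edge-weight assignment on vertex set V, generated by Γ, and let P be an ordered partition of V in which some vertices x, y satisfy Γ(x) ≤ Γ(y) but x's piece is strictly above y's piece. Then the ordered partition P' obtained by swapping x and y (placing x in y's piece and y in x's piece) satisfies v_w(P') ≥ v_w(P). -/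
/-- Swapping a pair that violates monotonicity cannot decrease the score: if
`w` is difference generated by `Γ`, and `Γ x ≤ Γ y` while `x`'s piece is
strictly above `y`'s piece in the ordered partition `P`, then the partition
`P'` obtained by exchanging `x` and `y` satisfies `v_w(P) ≤ v_w(P')`. -/
theorem swap_does_not_decrease_score
    {V : Type*} [Fintype V] [DecidableEq V] {k : ℕ}
    (w : V → V → ℝ) (Γ : V → ℝ)
    (hanti : ∀ x y : V, w x y = -w y x)
    (hΓ : ∀ x y : V, x ≠ y → w x y = Γ x - Γ y)
    (P : V → Fin k) (x y : V) (hxy : Γ x ≤ Γ y) (hP : P y < P x) :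
    opScore w P ≤
      opScore w (fun z => if z = x then P y else if z = y then P x else P z) := by
  have hxne : x ≠ y := by
    intro h; rw [h] at hP; exact lt_irrefl _ hP
  set σ := Equiv.swap x y with hσ
  set g : ℝ := Γ y - Γ x with hg
  have hg0 : 0 ≤ g := by simp [hg]; linarith
  set d : V → ℝ := fun z => if z = x then g else if z = y then -g else 0 with hd
  have hΓσ : ∀ z, Γ (σ z) = Γ z + d z := by
    intro z
    by_cases hz : z = x
    · simp [hd, hσ, hz, Equiv.swap_apply_left, hg]
    · by_cases hz' : z = y
      · simp [hd, hσ, hz', Equiv.swap_apply_right, hg, Ne.symm hxne]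
      · simp [hd, hσ, Equiv.swap_apply_of_ne_of_ne hz hz', hz, hz']
  set P' : V → Fin k := fun z => if z = x then P y else if z = y then P x else P z with hP'
  have hPσ : ∀ z, P' z = P (σ z) := by
    intro z
    by_cases hz : z = x
    · simp [hP', hσ, hz, Equiv.swap_apply_left]
    · by_cases hz' : z = y
      · simp [hP', hσ, hz', Equiv.swap_apply_right, Ne.symm hxne]
      · simp [hP', hσ, hz, hz', Equiv.swap_apply_of_ne_of_ne hz hz']
  -- reindex the swapped score
  have key : opScore w P' =
      ∑ a : V, ∑ b : V, if P b < P a then w (σ a) (σ b) else 0 := by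
    rw [opScore]
    rw [← Equiv.sum_comp σ (fun a => ∑ b : V, if P' b < P' a then w a b else 0)]
    refine Finset.sum_congr rfl fun a _ => ?_
    rw [← Equiv.sum_comp σ (fun b => if P' b < P' (σ a) then w (σ a) b else 0)]
    refine Finset.sum_congr rfl fun b _ => ?_
    rw [hPσ, hPσ]
    simp [hσ]
  have term_eq : ∀ a b : V, (if P b < P a then w (σ a) (σ b) else 0) =
      (if P b < P a then w a b else 0) + ((if P b < P a then d a else 0)
        - (if P b < P a then d b else 0)) := by
    intro a b
    by_cases h : P b < P a
    · have hab : a ≠ b := by intro h'; rw [h'] at h; exact lt_irrefl _ h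
      have hσab : σ a ≠ σ b := fun h' => hab (σ.injective h')
      rw [if_pos h, if_pos h, if_pos h, if_pos h, hΓ _ _ hσab, hΓ _ _ hab, hΓσ, hΓσ]
      ring
    · simp [h]
  have key2 : opScore w P' = opScore w P
      + ((∑ a : V, ∑ b : V, if P b < P a then d a else 0)
        - (∑ a : V, ∑ b : V, if P b < P a then d b else 0)) := by
    rw [key, opScore]
    rw [← Finset.sum_sub_distrib, ← Finset.sum_add_distrib]
    refine Finset.sum_congr rfl fun a _ => ?_
    rw [← Finset.sum_sub_distrib, ← Finset.sum_add_distrib]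
    exact Finset.sum_congr rfl fun b _ => term_eq a b
  set S : V → ℝ := fun z => ∑ b : V, if P b < P z then (1 : ℝ) else 0 with hS
  set T : V → ℝ := fun z => ∑ a : V, if P z < P a then (1 : ℝ) else 0 with hT
  have hsum1 : (∑ a : V, ∑ b : V, if P b < P a then d a else 0) = ∑ a : V, d a * S a := by
    refine Finset.sum_congr rfl fun a _ => ?_
    rw [hS, Finset.mul_sum]
    refine Finset.sum_congr rfl fun b _ => ?_
    by_cases h : P b < P a <;> simp [h]
  have hsum2 : (∑ a : V, ∑ b : V, if P b < P a then d b else 0) = ∑ b : V, d b * T b := by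
    rw [Finset.sum_comm]
    refine Finset.sum_congr rfl fun b _ => ?_
    rw [hT, Finset.mul_sum]
    refine Finset.sum_congr rfl fun a _ => ?_
    by_cases h : P b < P a <;> simp [h]
  have hsupp : ∀ f : V → ℝ, (∑ a : V, d a * f a) = g * f x - g * f y := by
    intro f
    have : (∑ a : V, d a * f a) = ∑ a ∈ ({x, y} : Finset V), d a * f a := by
      refine (Finset.sum_subset (Finset.subset_univ _) ?_).symm
      intro a _ ha
      simp only [Finset.mem_insert, Finset.mem_singleton, not_or] at ha
      simp [hd, ha.1, ha.2]
    rw [this, Finset.sum_pair hxne]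
    simp [hd, hxne, Ne.symm hxne]
    ring
  have hSle : S y ≤ S x := by
    refine Finset.sum_le_sum fun b _ => ?_
    by_cases h : P b < P y
    · rw [if_pos h, if_pos (h.trans hP)]
    · by_cases h' : P b < P x <;> simp [h, h']
  have hTle : T x ≤ T y := by
    refine Finset.sum_le_sum fun a _ => ?_
    by_cases h : P x < P a
    · rw [if_pos h, if_pos (hP.trans h)]
    · by_cases h' : P y < P a <;> simp [h, h']
  rw [key2, hsum1, hsum2, hsupp S, hsupp T]
  have h1 : 0 ≤ g * (S x - S y) := mul_nonneg hg0 (by linarith)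
  have h2 : 0 ≤ g * (T y - T x) := mul_nonneg hg0 (by linarith)
  nlinarith
end
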